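/- arXiv:2404.03895 — 6 statements merged into one kernel-verified Lean document; each statement's English description precedes it below -/
import Mathlib

section
/- Let p be a prime and let G be a finite p-group of exponent p^2. Then either G has exactly one cyclic subgroup of order p^2, or G contains at least two cyclic subgroups M and N of order p^2 such that the intersection M ∩ N has order p. -/
/-- The vertex set of the normal subgroup based power graph: `(G \ H) ∪ {e}`. -/
def nsbVertexSet {G : Type*} [Group G] (H : Subgroup G) : Set G :=
  {x | x ∉ H} ∪ {1}

/-- The normal subgroup based power graph `Γ_H(G)`: vertices are `(G \ H) ∪ {e}` and two
distinct vertices `a`, `b` are adjacent iff `aH = b^m H` or `bH = a^n H` for some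
positive integers `m`, `n`. -/
def nsbPowerGraph (G : Type*) [Group G] (H : Subgroup G) :
    SimpleGraph (nsbVertexSet H) where
  Adj a b := (a : G) ≠ (b : G) ∧
    ((∃ m : ℕ, 0 < m ∧ (QuotientGroup.mk (a : G) : G ⧸ H) = QuotientGroup.mk ((b : G) ^ m)) ∨
     (∃ n : ℕ, 0 < n ∧ (QuotientGroup.mk (b : G) : G ⧸ H) = QuotientGroup.mk ((a : G) ^ n)))
  symm := ⟨fun a b => fun ⟨hne, h⟩ => ⟨hne.symm, h.symm⟩⟩
  loopless := ⟨fun a => fun ⟨hne, _⟩ => hne rfl⟩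

/-- The power graph of a group: two distinct elements are adjacent iff one is a positive
power of the other. -/
def powerGraph (K : Type*) [Group K] : SimpleGraph K where
  Adj x y := x ≠ y ∧ ((∃ m : ℕ, 0 < m ∧ x = y ^ m) ∨ (∃ n : ℕ, 0 < n ∧ y = x ^ n))
  symm := ⟨fun x y => fun ⟨hne, h⟩ => ⟨hne.symm, h.symm⟩⟩
  loopless := ⟨fun x => fun ⟨hne, _⟩ => hne rfl⟩

/-- The complete graph `K_n`. -/
def kGraph (n : ℕ) : SimpleGraph (Fin n) := ⊤

/-- The disjoint union `mK_n` of `m` copies of the complete graph `K_n`. -/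
def unionKGraph (m n : ℕ) : SimpleGraph (Fin m × Fin n) where
  Adj x y := x.1 = y.1 ∧ x.2 ≠ y.2
  symm := ⟨fun x y => fun ⟨h1, h2⟩ => ⟨h1.symm, h2.symm⟩⟩
  loopless := ⟨fun x => fun ⟨_, h⟩ => h rfl⟩

/-- The join `Γ₁ ∨ Γ₂` of two graphs: their disjoint union together with all edges
between the two parts. -/
def graphJoin {α β : Type*} (G : SimpleGraph α) (H : SimpleGraph β) :
    SimpleGraph (α ⊕ β) where
  Adj u v := match u, v with
    | Sum.inl u, Sum.inl v => G.Adj u v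
    | Sum.inr u, Sum.inr v => H.Adj u v
    | _, _ => True
  symm := ⟨fun u v => match u, v with
    | Sum.inl u, Sum.inl v => G.adj_symm
    | Sum.inr u, Sum.inr v => H.adj_symm
    | Sum.inl _, Sum.inr _ | Sum.inr _, Sum.inl _ => fun _ => trivial⟩
  loopless := ⟨fun u => by cases u <;> simp [SimpleGraph.irrefl]⟩

/-!
Two distinct subgroups of order `p²` with a nontrivial common element meet in a group of order
`p`. The centre of a `p`-group contains an element `z` of order `p`. If `z` lies in two distinct
cyclic subgroups of order `p²`, they meet in order `p`. If `z ∉ ⟨a⟩` with `orderOf a = p²`, then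
`(a z)ᵖ = aᵖ ≠ 1`, so `⟨a z⟩` is a second cyclic subgroup of order `p²`, sharing `aᵖ` with `⟨a⟩`.
-/

open Subgroup

section

variable {G : Type*} [Group G] {p : ℕ}

lemma exists_orderOf_eq_of_exponent_eq_prime_pow (hp : p.Prime) {n : ℕ}
    (hexp : Monoid.exponent G = p ^ n) : ∃ g : G, orderOf g = p ^ n := by
  simpa [hexp, hp.factorization_self] using
    hp.exists_orderOf_eq_pow_factorization_exponent (G := G)

lemma IsPGroup.exists_mem_center_orderOf_eq [Fact p.Prime] [Finite G] [Nontrivial G]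
    (hG : IsPGroup p G) : ∃ z ∈ center G, orderOf z = p := by
  have := hG.center_nontrivial
  have hdvd : p ∣ Nat.card (center G) :=
    (hG.to_subgroup (center G)).card_eq_or_dvd.resolve_left Finite.one_lt_card.ne'
  obtain ⟨z, hz⟩ := exists_prime_orderOf_dvd_card' p hdvd
  exact ⟨z, z.2, by rw [orderOf_coe, hz]⟩

lemma card_inf_eq_prime_of_ne (hp : p.Prime) {M N : Subgroup G} (hMN : M ≠ N)
    (hM : Nat.card M = p ^ 2) (hN : Nat.card N = p ^ 2) {z : G} (hzM : z ∈ M) (hzN : z ∈ N)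
    (hz : z ≠ 1) : Nat.card ↥(M ⊓ N) = p := by
  have : Finite M := Nat.finite_of_card_ne_zero (by simp [hM, hp.ne_zero])
  have hdvd : Nat.card ↥(M ⊓ N) ∣ p ^ 2 := hM ▸ card_dvd_of_le inf_le_left
  obtain ⟨i, hi, hcard⟩ := (Nat.dvd_prime_pow hp).mp hdvd
  interval_cases i
  · rw [pow_zero, card_eq_one] at hcard
    exact absurd (hcard ▸ mem_inf.mpr ⟨hzM, hzN⟩ : z ∈ (⊥ : Subgroup G)) hz
  · exact pow_one p ▸ hcard
  · have hMle : M ≤ N := inf_eq_left.mp (eq_of_le_of_card_ge inf_le_left (by rw [hcard, hM]))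
    have : Finite N := Nat.finite_of_card_ne_zero (by simp [hN, hp.ne_zero])
    exact absurd (eq_of_le_of_card_ge hMle (by rw [hM, hN])) hMN

lemma exists_zpowers_card_inf_eq_prime (hp : p.Prime) {a z : G} (ha : orderOf a = p ^ 2)
    (hz : orderOf z = p) (hcomm : Commute a z) (hza : z ∉ zpowers a) :
    ∃ N : Subgroup G, zpowers a ≠ N ∧ IsCyclic N ∧ Nat.card N = p ^ 2 ∧
      Nat.card ↥(zpowers a ⊓ N) = p := by
  have hpow : (a * z) ^ p = a ^ p := by
    rw [hcomm.mul_pow, ← hz, pow_orderOf_eq_one, mul_one]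
  have hap : a ^ p ≠ 1 :=
    pow_ne_one_of_lt_orderOf hp.ne_zero (ha ▸ lt_self_pow₀ hp.one_lt one_lt_two)
  have hord : orderOf (a * z) = p ^ 2 := by
    refine orderOf_eq_prime_pow (hp := ⟨hp⟩) (n := 1) (by rwa [pow_one, hpow]) ?_
    rw [pow_succ, pow_mul, pow_one, hpow, ← pow_mul, ← sq, ← ha, pow_orderOf_eq_one]
  have hne : zpowers a ≠ zpowers (a * z) := fun h => hza <| by
    have := mul_mem (inv_mem (mem_zpowers a)) (h ▸ mem_zpowers (a * z))
    rwa [inv_mul_cancel_left] at this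
  have hcard : ∀ x : G, orderOf x = p ^ 2 → Nat.card (zpowers x) = p ^ 2 := fun x hx => by
    rw [Nat.card_zpowers, hx]
  refine ⟨zpowers (a * z), hne, inferInstance, hcard _ hord, ?_⟩
  exact card_inf_eq_prime_of_ne hp hne (hcard a ha) (hcard _ hord) (pow_mem (mem_zpowers a) p)
    (hpow ▸ pow_mem (mem_zpowers _) p) hap

lemma exists_cyclic_card_inf_eq_prime (hp : p.Prime) {M : Subgroup G} (hMc : IsCyclic M)
    (hM : Nat.card M = p ^ 2) {z : G} (hzC : z ∈ center G) (hz : orderOf z = p) (hzM : z ∉ M) :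
    ∃ N : Subgroup G, M ≠ N ∧ IsCyclic N ∧ Nat.card N = p ^ 2 ∧ Nat.card ↥(M ⊓ N) = p := by
  obtain ⟨a, rfl⟩ := (M.isCyclic_iff_exists_zpowers_eq_top).mp hMc
  exact exists_zpowers_card_inf_eq_prime hp (by rwa [← Nat.card_zpowers])
    hz (mem_center_iff.mp hzC a) hzM

end

/-- A finite `p`-group of exponent `p²` has exactly one cyclic subgroup of
order `p²`, or two cyclic subgroups `M`, `N` of order `p²` with `|M ∩ N| = p`. -/
theorem statement_5 {G : Type*} [Group G] [Fintype G] (p : ℕ) (hp : p.Prime)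
    (hpG : IsPGroup p G) (hexp : Monoid.exponent G = p ^ 2) :
    (∃! K : Subgroup G, IsCyclic ↥K ∧ Nat.card ↥K = p ^ 2) ∨
    (∃ M N : Subgroup G, M ≠ N ∧ IsCyclic ↥M ∧ IsCyclic ↥N ∧
      Nat.card ↥M = p ^ 2 ∧ Nat.card ↥N = p ^ 2 ∧ Nat.card ↥(M ⊓ N) = p) := by
  have := Fact.mk hp
  obtain ⟨g, hg⟩ := exists_orderOf_eq_of_exponent_eq_prime_pow hp hexp
  have : Nontrivial G := nontrivial_of_ne g 1 <| by
    rintro rfl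
    exact (one_lt_pow₀ hp.one_lt two_ne_zero).ne (orderOf_one.symm.trans hg)
  obtain ⟨z, hzC, hz⟩ := hpG.exists_mem_center_orderOf_eq
  have hz1 : z ≠ 1 := fun h => hp.ne_one (by rw [← hz, h, orderOf_one])
  refine or_iff_not_imp_left.mpr fun huniq => ?_
  obtain ⟨M, N, ⟨hMc, hM⟩, ⟨hNc, hN⟩, hMN⟩ : ∃ M N : Subgroup G,
      (IsCyclic M ∧ Nat.card M = p ^ 2) ∧ (IsCyclic N ∧ Nat.card N = p ^ 2) ∧ M ≠ N := by
    by_contra! h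
    exact huniq <| existsUnique_of_exists_of_unique
      ⟨zpowers g, inferInstance, by rw [Nat.card_zpowers, hg]⟩ h
  by_cases hzM : z ∈ M
  · by_cases hzN : z ∈ N
    · exact ⟨M, N, hMN, hMc, hNc, hM, hN, card_inf_eq_prime_of_ne hp hMN hM hN hzM hzN hz1⟩
    · obtain ⟨N', hNN', hN'c, hN', hcard⟩ := exists_cyclic_card_inf_eq_prime hp hNc hN hzC hz hzN
      exact ⟨N, N', hNN', hNc, hN'c, hN, hN', hcard⟩
  · obtain ⟨N', hMN', hN'c, hN', hcard⟩ := exists_cyclic_card_inf_eq_prime hp hMc hM hzC hz hzM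
    exact ⟨M, N', hMN', hMc, hN'c, hM, hN', hcard⟩
end

section
/- Let G be a finite group, H a proper normal subgroup of G, and let a ∈ G \ H. Then the set aH ∪ {e} is a clique in the normal subgroup based power graph Γ_H(G); that is, the subgraph of Γ_H(G) induced by aH ∪ {e} is a complete graph on |H| + 1 vertices. -/
open scoped Pointwise

/-! Any two elements of a coset `aH` have the same image in `G ⧸ H`, so they are joined
(with exponent `1`), and `e` is joined to every vertex `v` since `eH = v ^ (orderOf v) H`.
When `a ∉ H` the coset `aH` avoids `H`, so `aH ∪ {e}` lies in the vertex set and has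
`|H| + 1` elements. -/

section

variable {G : Type*} [Group G] {H : Subgroup G}

namespace nsbPowerGraph

theorem adj_of_mk_eq {u v : nsbVertexSet H} (huv : (u : G) ≠ v)
    (h : (u : G ⧸ H) = (v : G)) : (nsbPowerGraph G H).Adj u v :=
  ⟨huv, Or.inl ⟨1, one_pos, by rw [pow_one, h]⟩⟩

theorem adj_of_eq_one {u v : nsbVertexSet H} (huv : (u : G) ≠ v) (hu : (u : G) = 1)
    (hv : IsOfFinOrder (v : G)) : (nsbPowerGraph G H).Adj u v :=
  ⟨huv, Or.inl ⟨orderOf (v : G), hv.orderOf_pos, by rw [hu, pow_orderOf_eq_one]⟩⟩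

theorem isClique_leftCoset_union_one [Finite G] (a : G) :
    (nsbPowerGraph G H).IsClique
      {v : nsbVertexSet H | (v : G) ∈ a • (H : Set G) ∨ (v : G) = 1} := by
  intro u hu v hv hne
  have huv : (u : G) ≠ v := Subtype.coe_injective.ne hne
  rcases hu with hu | hu <;> rcases hv with hv | hv
  · rw [mem_leftCoset_iff, SetLike.mem_coe, ← QuotientGroup.eq] at hu hv
    exact adj_of_mk_eq huv (hu.symm.trans hv)
  · exact (adj_of_eq_one huv.symm hv (isOfFinOrder_of_finite _)).symm
  · exact adj_of_eq_one huv hu (isOfFinOrder_of_finite _)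
  · exact absurd (hu.trans hv.symm) huv

end nsbPowerGraph

theorem notMem_of_mem_leftCoset {a x : G} (ha : a ∉ H) (hx : x ∈ a • (H : Set G)) : x ∉ H := by
  intro hxH
  rw [mem_leftCoset_iff] at hx
  exact ha (by simpa using H.mul_mem hxH (H.inv_mem hx))

theorem ncard_leftCoset_union_one [Finite H] {a : G} (ha : a ∉ H) :
    {v : nsbVertexSet H | (v : G) ∈ a • (H : Set G) ∨ (v : G) = 1}.ncard = Nat.card H + 1 := by
  have hsub : insert 1 (a • (H : Set G)) ⊆ Set.range ((↑) : nsbVertexSet H → G) := by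
    rw [Subtype.range_val]
    rintro x (rfl | hx)
    · exact Or.inr rfl
    · exact Or.inl (notMem_of_mem_leftCoset ha hx)
  have hone : (1 : G) ∉ a • (H : Set G) := fun h ↦ notMem_of_mem_leftCoset ha h H.one_mem
  calc {v : nsbVertexSet H | (v : G) ∈ a • (H : Set G) ∨ (v : G) = 1}.ncard
      = (insert 1 (a • (H : Set G))).ncard := by
        rw [← Set.ncard_preimage_of_injective_subset_range Subtype.coe_injective hsub]
        congr 1
        ext v
        exact or_comm
    _ = Nat.card H + 1 := by
        rw [Set.ncard_insert_of_notMem hone ((H : Set G).toFinite.smul_set), Set.ncard_smul_set,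
          ← Nat.card_coe_set_eq]
        rfl

end

theorem statement_6_general {G : Type*} [Group G] [Fintype G] (H : Subgroup G)
    (a : G) (ha : a ∉ H) :
    (nsbPowerGraph G H).IsClique
      {v : nsbVertexSet H | (v : G) ∈ a • (H : Set G) ∨ (v : G) = 1} ∧
    ({v : nsbVertexSet H | (v : G) ∈ a • (H : Set G) ∨ (v : G) = 1}).ncard
      = Nat.card H + 1 :=
  ⟨nsbPowerGraph.isClique_leftCoset_union_one a, ncard_leftCoset_union_one ha⟩

/-- For `a ∈ G \ H`, the set `aH ∪ {e}` is a clique of `|H| + 1` vertices in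
`Γ_H(G)`. -/
theorem statement_6 {G : Type*} [Group G] [Fintype G] (H : Subgroup G) [H.Normal]
    (hproper : H ≠ ⊤) (a : G) (ha : a ∉ H) :
    (nsbPowerGraph G H).IsClique
      {v : nsbVertexSet H | (v : G) ∈ a • (H : Set G) ∨ (v : G) = 1} ∧
    ({v : nsbVertexSet H | (v : G) ∈ a • (H : Set G) ∨ (v : G) = 1}).ncard
      = Nat.card H + 1 :=
  statement_6_general H a ha
end

section
/- Let G be a finite group and H a normal subgroup of G with |H| = n such that the quotient group G/H is isomorphic to the cyclic group Z_2. Then the normal subgroup based power graph Γ_H(G) is isomorphic to the complete graph K_{n+1}. -/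
/-!
A quotient `G ⧸ H` of prime order is generated by each of its nontrivial elements, so any two
vertices outside `H` are joined, and `e` is joined to every `a` because `a ^ |G ⧸ H| ∈ H`.
Hence `Γ_H(G)` is complete as soon as `H` has prime index, and for index `2` it has
`|G| - |H| + 1 = |H| + 1` vertices.
-/

section

variable {G : Type*} [Group G]

lemma exists_pos_pow_eq_of_prime_card (hp : (Nat.card G).Prime) {x y : G} (hx : x ≠ 1)
    (hy : y ≠ 1) : ∃ m : ℕ, 0 < m ∧ y = x ^ m := by
  have := Fact.mk hp
  obtain ⟨m, rfl⟩ := mem_powers_of_prime_card rfl hx (g' := y)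
  exact ⟨m, Nat.pos_of_ne_zero (by rintro rfl; exact hy (pow_zero x)), rfl⟩

variable {H : Subgroup G}

theorem card_nsbVertexSet [Finite G] :
    Nat.card (nsbVertexSet H) = Nat.card G - Nat.card H + 1 := by
  have hvert : nsbVertexSet H = (H : Set G)ᶜ ∪ {1} := rfl
  rw [Nat.card_coe_set_eq, hvert, Set.ncard_union_eq (by simp [H.one_mem]), Set.ncard_compl,
    Set.ncard_singleton, ← Nat.card_coe_set_eq]
  rfl

variable [H.Normal]

theorem nsbPowerGraph_eq_top_of_prime_index (hp : H.index.Prime) : nsbPowerGraph G H = ⊤ := by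
  have : Finite (G ⧸ H) := Nat.finite_of_card_ne_zero hp.ne_zero
  have one_eq_pow (x : G) :
      ∃ n : ℕ, 0 < n ∧ (QuotientGroup.mk 1 : G ⧸ H) = QuotientGroup.mk (x ^ n) :=
    let ⟨n, hn, hxn⟩ := (isOfFinOrder_of_finite (x : G ⧸ H)).exists_pow_eq_one
    ⟨n, hn, by rw [QuotientGroup.mk_pow, hxn, QuotientGroup.mk_one]⟩
  ext a b
  refine ⟨fun h => h.1 ∘ congrArg Subtype.val,
    fun hne => ⟨fun h => hne (Subtype.ext h), ?_⟩⟩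
  obtain ⟨a, ha⟩ := a
  obtain ⟨b, hb⟩ := b
  rcases ha with ha | rfl
  · rcases hb with hb | rfl
    · have ne_one {x : G} (hx : x ∉ H) : (x : G ⧸ H) ≠ 1 := by
        rwa [Ne, QuotientGroup.eq_one_iff]
      exact Or.inl (by simpa only [QuotientGroup.mk_pow] using
        exists_pos_pow_eq_of_prime_card hp (ne_one hb) (ne_one ha))
    · exact Or.inr (one_eq_pow a)
  · exact Or.inl (one_eq_pow b)

end

lemma nonempty_iso_kGraph_of_eq_top {V : Type*} [Finite V] {Γ : SimpleGraph V} (h : Γ = ⊤) :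
    Nonempty (Γ ≃g kGraph (Nat.card V)) :=
  h ▸ ⟨SimpleGraph.Iso.completeGraph (Finite.equivFin V)⟩

/-- If `|H| = n` and `G/H ≅ Z₂`, then `Γ_H(G) ≅ K_{n+1}`. -/
theorem statement_7 {G : Type*} [Group G] [Fintype G] (H : Subgroup G) [H.Normal]
    (n : ℕ) (hcard : Nat.card H = n)
    (hq : Nonempty (G ⧸ H ≃* Multiplicative (ZMod 2))) :
    Nonempty (nsbPowerGraph G H ≃g kGraph (n + 1)) := by
  obtain ⟨f⟩ := hq
  have hindex : H.index = 2 := by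
    rw [Subgroup.index, Nat.card_congr f.toEquiv]
    simp
  have hG : Nat.card G = 2 * n := by
    rw [← H.card_mul_index, hindex, hcard, mul_comm]
  have hV : Nat.card (nsbVertexSet H) = n + 1 := by
    rw [card_nsbVertexSet, hG, hcard]
    omega
  rw [← hV]
  exact nonempty_iso_kGraph_of_eq_top
    (nsbPowerGraph_eq_top_of_prime_index (hindex ▸ Nat.prime_two))
end

section
/- Let G be a finite group and H a normal subgroup of G with |H| = 2 such that the quotient group G/H contains an element of order at least 5. Then the normal subgroup based power graph Γ_H(G) contains a clique on 9 vertices, i.e., a subgraph isomorphic to the complete graph K_9. -/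
/-! The cosets `x ^ k`, `k ∈ [-2, 2]`, of an element `x ∈ G ⧸ H` of order at least `5` are five
distinct elements, and any two of them are powers of one another because any two integers in
`[-2, 2]` are comparable under divisibility. The vertices of `Γ_H(G)` lying over them form a
clique: over the trivial coset only `e` is a vertex, over each of the other four cosets both of its
`|H| = 2` elements are, giving `1 + 2 · 4 = 9` vertices. -/

theorem IsOfFinOrder.exists_pos_pow_eq_zpow {K : Type*} [Group K] {a : K} (ha : IsOfFinOrder a)
    (k : ℤ) : ∃ m : ℕ, 0 < m ∧ a ^ k = a ^ m := by
  have hn : (0 : ℤ) < orderOf a := by exact_mod_cast ha.orderOf_pos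
  refine ⟨(k % orderOf a).toNat + orderOf a, by have := ha.orderOf_pos; omega, ?_⟩
  rw [pow_add, pow_orderOf_eq_one, mul_one, ← zpow_natCast,
    Int.toNat_of_nonneg (Int.emod_nonneg k hn.ne'), zpow_mod_orderOf]

theorem powerGraph_isClique_zpow_image {K : Type*} [Group K] [Finite K] (x : K) {S : Set ℤ}
    (hS : IsChain (· ∣ ·) S) : (powerGraph K).IsClique ((fun k : ℤ => x ^ k) '' S) := by
  have pow_of_dvd : ∀ {i j : ℤ}, i ∣ j → ∃ m : ℕ, 0 < m ∧ x ^ j = (x ^ i) ^ m := by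
    rintro i _ ⟨k, rfl⟩
    rw [zpow_mul]
    exact (isOfFinOrder_of_finite (x ^ i)).exists_pos_pow_eq_zpow k
  rintro _ ⟨i, hi, rfl⟩ _ ⟨j, hj, rfl⟩ hne
  refine ⟨hne, ?_⟩
  rcases hS hi hj (fun h => hne (congrArg _ h)) with hij | hji
  · exact Or.inr (pow_of_dvd hij)
  · exact Or.inl (pow_of_dvd hji)

theorem zpow_injOn_Icc {K : Type*} [Group K] (x : K) {a b : ℤ} (h : b - a < orderOf x) :
    Set.InjOn (fun k : ℤ => x ^ k) (Set.Icc a b) := by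
  intro i hi j hj hij
  have hdvd : (orderOf x : ℤ) ∣ j - i := (zpow_eq_zpow_iff_modEq.mp hij).dvd
  have hlt : |j - i| < orderOf x := by
    rw [abs_lt]; constructor <;> linarith [hi.1, hi.2, hj.1, hj.2]
  linarith [Int.eq_zero_of_abs_lt_dvd hdvd hlt]

section NsbPowerGraph

variable {G : Type*} [Group G] (H : Subgroup G) [H.Normal]

theorem nsbPowerGraph_isClique_preimage {C : Set (G ⧸ H)} (hC : (powerGraph (G ⧸ H)).IsClique C) :
    (nsbPowerGraph G H).IsClique {v | ((v : G) : G ⧸ H) ∈ C} := by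
  intro v hv w hw hvw
  refine ⟨Subtype.val_injective.ne hvw, ?_⟩
  by_cases hq : ((v : G) : G ⧸ H) = ((w : G) : G ⧸ H)
  · exact Or.inl ⟨1, one_pos, by rw [pow_one, hq]⟩
  · obtain ⟨-, ⟨m, hm, hvm⟩ | ⟨m, hm, hwm⟩⟩ := hC hv hw hq
    · exact Or.inl ⟨m, hm, by rw [QuotientGroup.mk_pow, hvm]⟩
    · exact Or.inr ⟨m, hm, by rw [QuotientGroup.mk_pow, hwm]⟩

theorem ncard_nsbVertexSet_preimage [Finite G] {C : Set (G ⧸ H)} (hC : 1 ∈ C) :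
    {v : nsbVertexSet H | ((v : G) : G ⧸ H) ∈ C}.ncard = Nat.card H * (C \ {1}).ncard + 1 := by
  have himage : Subtype.val '' {v : nsbVertexSet H | ((v : G) : G ⧸ H) ∈ C} =
      QuotientGroup.mk ⁻¹' (C \ {1}) ∪ {1} := by
    ext g
    by_cases hg : g = 1
    · simp [hg, hC, nsbVertexSet]
    · simp [nsbVertexSet, hg, QuotientGroup.eq_one_iff]
  rw [← Set.ncard_image_of_injective _ Subtype.val_injective, himage,
    Set.ncard_union_eq (by simp), Set.ncard_singleton, ← Nat.card_coe_set_eq,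
    QuotientGroup.card_preimage_mk, Nat.card_coe_set_eq]

end NsbPowerGraph

/-- If `|H| = 2` and `G/H` has an element of order at least `5`, then
`Γ_H(G)` contains a clique on `9` vertices. -/
theorem statement_9 {G : Type*} [Group G] [Fintype G] (H : Subgroup G) [H.Normal]
    (hcard : Nat.card H = 2) (hx : ∃ x : G ⧸ H, 5 ≤ orderOf x) :
    ∃ S : Set (nsbVertexSet H), (nsbPowerGraph G H).IsClique S ∧ S.ncard = 9 := by
  obtain ⟨x, hx⟩ := hx
  have hchain : IsChain (· ∣ ·) (Set.Icc (-2 : ℤ) 2) := by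
    rintro i ⟨hi₁, hi₂⟩ j ⟨hj₁, hj₂⟩ -
    interval_cases i <;> interval_cases j <;> decide
  have hinj : Set.InjOn (fun k : ℤ => x ^ k) (Set.Icc (-2) 2) := zpow_injOn_Icc x (by omega)
  set C := (fun k : ℤ => x ^ k) '' Set.Icc (-2) 2
  have hone : 1 ∈ C := ⟨0, by norm_num, zpow_zero x⟩
  refine ⟨_, nsbPowerGraph_isClique_preimage H (powerGraph_isClique_zpow_image x hchain), ?_⟩
  rw [ncard_nsbVertexSet_preimage H hone, Set.ncard_sdiff_singleton_of_mem hone,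
    hinj.ncard_image, hcard, ← Finset.coe_Icc, Set.ncard_coe_finset]
  rfl
end

section
/- Let G be a finite group and H a normal subgroup of G with |H| = 2 such that the quotient group G/H has at least four distinct cyclic subgroups of order 3, generated by a_1H, a_2H, a_3H, a_4H respectively. Then the subgraph of the normal subgroup based power graph Γ_H(G) induced by the set (a_1H ∪ a_2H ∪ a_3H ∪ a_4H) ∪ (a_1^2H ∪ a_2^2H ∪ a_3^2H ∪ a_4^2H) ∪ {e} is isomorphic to the join K_1 ∨ 4K_4. -/
theorem exists_pos_pow_eq_iff_mem_zpowers {G : Type*} [Group G] {x y : G} (hy : IsOfFinOrder y) :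
    (∃ m : ℕ, 0 < m ∧ x = y ^ m) ↔ x ∈ Subgroup.zpowers y := by
  rw [← hy.mem_powers_iff_mem_zpowers, Submonoid.mem_powers_iff]
  constructor
  · rintro ⟨m, -, rfl⟩
    exact ⟨m, rfl⟩
  · rintro ⟨m, rfl⟩
    rcases m.eq_zero_or_pos with rfl | hm
    · exact ⟨orderOf y, hy.orderOf_pos, by rw [pow_zero, pow_orderOf_eq_one]⟩
    · exact ⟨m, hm, rfl⟩

theorem zpowers_eq_of_le_of_orderOf_eq {G : Type*} [Group G] {x y : G}
    (hle : Subgroup.zpowers x ≤ Subgroup.zpowers y) (hxy : orderOf x = orderOf y)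
    (hy : orderOf y ≠ 0) : Subgroup.zpowers x = Subgroup.zpowers y := by
  have : Finite (Subgroup.zpowers y) := Nat.finite_of_card_ne_zero (by rwa [Nat.card_zpowers])
  exact Subgroup.eq_of_le_of_card_ge hle (by rw [Nat.card_zpowers, Nat.card_zpowers, hxy])

theorem eq_of_zpowers_le_zpowers {ι G : Type*} [Group G] {b : ι → G} {n : ℕ} (hn : n ≠ 0)
    (hord : ∀ i, orderOf (b i) = n)
    (hdist : ∀ i j, i ≠ j → Subgroup.zpowers (b i) ≠ Subgroup.zpowers (b j)) {i j : ι}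
    (hle : Subgroup.zpowers (b i) ≤ Subgroup.zpowers (b j)) : i = j :=
  by_contra fun hij => hdist i j hij <|
    zpowers_eq_of_le_of_orderOf_eq hle ((hord i).trans (hord j).symm) (hord j ▸ hn)

section OrderThree

variable {G : Type*} [Group G] {x y : G}

theorem zpowers_eq_of_orderOf_eq_three (hx : orderOf x = 3) (hy : y = x ∨ y = x ^ 2) :
    Subgroup.zpowers y = Subgroup.zpowers x := by
  rcases hy with rfl | rfl
  · rfl
  · have hx3 : x ^ 2 * x = 1 := by
      rw [← pow_succ, show 2 + 1 = orderOf x by rw [hx], pow_orderOf_eq_one]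
    rw [eq_inv_of_mul_eq_one_left hx3, Subgroup.zpowers_inv]

theorem ne_pow_two_of_orderOf_eq_three (hx : orderOf x = 3) : x ≠ x ^ 2 := by
  intro h
  rw [pow_two, left_eq_mul] at h
  simp [h] at hx

end OrderThree

theorem nonempty_iso_graphJoin_unionKGraph {V : Type*} [Finite V] (Γ : SimpleGraph V)
    {m n : ℕ} (c : V) (B : Fin m → Set V)
    (hcover : ∀ v, v ≠ c ↔ ∃ i, v ∈ B i)
    (hdisj : ∀ i j v, v ∈ B i → v ∈ B j → i = j)
    (hcard : ∀ i, Nat.card (B i) = n)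
    (hcenter : ∀ v, v ≠ c → Γ.Adj c v)
    (hblock : ∀ i j u v, u ∈ B i → v ∈ B j → (Γ.Adj u v ↔ i = j ∧ u ≠ v)) :
    Nonempty (Γ ≃g graphJoin (kGraph 1) (unionKGraph m n)) := by
  let e : ∀ i, Fin n ≃ B i := fun i => (Finite.equivFinOfCardEq (hcard i)).symm
  have he : ∀ i j, (e i j : V) ≠ c := fun i j => (hcover _).2 ⟨i, (e i j).2⟩
  have he_inj : ∀ i j j', (e i j : V) = e i j' ↔ j = j' := fun i j j' =>
    Subtype.val_injective.eq_iff.trans (e i).injective.eq_iff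
  let φ : Fin 1 ⊕ Fin m × Fin n → V := Sum.elim (fun _ => c) (fun p => e p.1 p.2)
  have hφ : Function.Bijective φ := by
    refine ⟨?_, fun v => ?_⟩
    · rintro (x | ⟨i, j⟩) (y | ⟨i', j'⟩) h
      · rw [Subsingleton.elim x y]
      · exact absurd h.symm (he i' j')
      · exact absurd h (he i j)
      · have h : (e i j : V) = e i' j' := h
        obtain rfl : i = i' := hdisj i i' _ (e i j).2 (h ▸ (e i' j').2)
        rw [(he_inj i j j').1 h]
    · by_cases hv : v = c
      · exact ⟨Sum.inl 0, hv.symm⟩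
      · obtain ⟨i, hi⟩ := (hcover v).1 hv
        exact ⟨Sum.inr (i, (e i).symm ⟨v, hi⟩), by simp [φ]⟩
  refine ⟨(RelIso.mk (Equiv.ofBijective φ hφ) ?_).symm⟩
  rintro (x | ⟨i, j⟩) (y | ⟨i', j'⟩)
  · simp [φ, graphJoin, kGraph, Subsingleton.elim x y]
  · simpa [φ, graphJoin] using hcenter _ (he i' j')
  · simpa [φ, graphJoin] using (hcenter _ (he i j)).symm
  · simp only [Equiv.ofBijective_apply, φ, Sum.elim_inr, graphJoin, unionKGraph,
      hblock i i' _ _ (e i j).2 (e i' j').2]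
    constructor
    · rintro ⟨rfl, h⟩
      exact ⟨rfl, fun hj => h ((he_inj i j j').2 hj)⟩
    · rintro ⟨rfl, h⟩
      exact ⟨rfl, fun hj => h ((he_inj i j j').1 hj)⟩

section nsbPowerGraph

variable {G : Type*} [Group G] {H : Subgroup G} [H.Normal]

theorem nsbPowerGraph_adj_iff [Finite (G ⧸ H)] {u v : nsbVertexSet H} :
    (nsbPowerGraph G H).Adj u v ↔ (u : G) ≠ v ∧
      (((u : G) : G ⧸ H) ∈ Subgroup.zpowers ((v : G) : G ⧸ H) ∨
        ((v : G) : G ⧸ H) ∈ Subgroup.zpowers ((u : G) : G ⧸ H)) := by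
  simp only [nsbPowerGraph, QuotientGroup.mk_pow]
  rw [exists_pos_pow_eq_iff_mem_zpowers (isOfFinOrder_of_finite _),
    exists_pos_pow_eq_iff_mem_zpowers (isOfFinOrder_of_finite _)]

theorem card_setOf_mk_mem {S : Set (nsbVertexSet H)} {T : Set (G ⧸ H)} (h1 : 1 ∉ T)
    (hT : ∀ v : nsbVertexSet H, ((v : G) : G ⧸ H) ∈ T → v ∈ S) :
    Nat.card {v : S | (((v : nsbVertexSet H) : G) : G ⧸ H) ∈ T} = Nat.card H * Nat.card T := by
  rw [← QuotientGroup.card_preimage_mk]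
  refine Nat.card_congr
    { toFun := fun v => ⟨v.1.1.1, v.2⟩
      invFun := fun g => ⟨⟨⟨g, Or.inl fun hg => h1 ?_⟩, hT _ g.2⟩, g.2⟩
      left_inv := fun _ => rfl
      right_inv := fun _ => rfl }
  simpa only [Set.mem_preimage, (QuotientGroup.eq_one_iff _).2 hg] using g.2

end nsbPowerGraph

def cosetPair {G : Type*} [Group G] (H : Subgroup G) (g : G) : Set (G ⧸ H) :=
  {(g : G ⧸ H), ((g ^ 2 : G) : G ⧸ H)}

section cosetPair

variable {G : Type*} [Group G] {H : Subgroup G} [H.Normal] {g : G}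

theorem zpowers_eq_of_mem_cosetPair (hg : orderOf (g : G ⧸ H) = 3) {x : G ⧸ H}
    (hx : x ∈ cosetPair H g) : Subgroup.zpowers x = Subgroup.zpowers (g : G ⧸ H) :=
  zpowers_eq_of_orderOf_eq_three hg (by simpa [cosetPair] using hx)

theorem one_notMem_cosetPair (hg : orderOf (g : G ⧸ H) = 3) : 1 ∉ cosetPair H g := by
  intro h1
  have h := zpowers_eq_of_mem_cosetPair hg h1
  rw [Subgroup.zpowers_one_eq_bot, eq_comm, Subgroup.zpowers_eq_bot] at h
  simp [h] at hg

theorem card_cosetPair (hg : orderOf (g : G ⧸ H) = 3) : Nat.card (cosetPair H g) = 2 := by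
  have hne : (g : G ⧸ H) ≠ ((g ^ 2 : G) : G ⧸ H) := by
    rw [QuotientGroup.mk_pow]
    exact ne_pow_two_of_orderOf_eq_three hg
  rw [Nat.card_coe_set_eq, cosetPair, Set.ncard_pair hne]

end cosetPair

theorem nonempty_iso_induce_nsbPowerGraph_of_orderOf_eq_three {G : Type*} [Group G] [Finite G]
    {H : Subgroup G} [H.Normal] {m : ℕ} (a : Fin m → G)
    (hord : ∀ i, orderOf (a i : G ⧸ H) = 3)
    (hdist : ∀ i j, i ≠ j → Subgroup.zpowers (a i : G ⧸ H) ≠ Subgroup.zpowers (a j : G ⧸ H)) :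
    Nonempty (((nsbPowerGraph G H).induce
      {v : nsbVertexSet H |
        (∃ i, ((v : G) : G ⧸ H) = (a i : G ⧸ H) ∨ ((v : G) : G ⧸ H) = ((a i ^ 2 : G) : G ⧸ H)) ∨
          (v : G) = 1})
      ≃g graphJoin (kGraph 1) (unionKGraph m (Nat.card H * 2))) := by
  have hle {i j : Fin m} := eq_of_zpowers_le_zpowers (i := i) (j := j) three_ne_zero hord hdist
  refine nonempty_iso_graphJoin_unionKGraph _ ⟨⟨1, Or.inr rfl⟩, Or.inr rfl⟩
    (fun i => {v | (((v : nsbVertexSet H) : G) : G ⧸ H) ∈ cosetPair H (a i)})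
    ?cover ?disj ?card ?center ?block
  case cover =>
    intro v
    constructor
    · intro hv
      rcases v.2 with ⟨i, hi⟩ | h1
      · exact ⟨i, hi⟩
      · exact absurd (Subtype.ext (Subtype.ext h1)) hv
    · rintro ⟨i, hi⟩ rfl
      exact one_notMem_cosetPair (hord i) hi
  case disj =>
    exact fun i j v hi hj => hle
      ((zpowers_eq_of_mem_cosetPair (hord i) hi).symm.trans
        (zpowers_eq_of_mem_cosetPair (hord j) hj)).le
  case card =>
    intro i
    refine (card_setOf_mk_mem (one_notMem_cosetPair (hord i)) fun v hv => Or.inl ⟨i, hv⟩).trans ?_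
    rw [card_cosetPair (hord i)]
  case center =>
    intro v hv
    rw [SimpleGraph.induce_adj, nsbPowerGraph_adj_iff]
    refine ⟨fun h => hv (Subtype.ext (Subtype.ext h.symm)), Or.inl ?_⟩
    rw [QuotientGroup.mk_one]
    exact Subgroup.one_mem _
  case block =>
    intro i j u v hu hv
    rw [SimpleGraph.induce_adj, nsbPowerGraph_adj_iff, ← Subgroup.zpowers_le,
      ← Subgroup.zpowers_le, zpowers_eq_of_mem_cosetPair (hord i) hu,
      zpowers_eq_of_mem_cosetPair (hord j) hv]
    constructor
    · rintro ⟨huv, hij | hji⟩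
      · exact ⟨hle hij, fun h => huv (by rw [h])⟩
      · exact ⟨(hle hji).symm, fun h => huv (by rw [h])⟩
    · rintro ⟨rfl, huv⟩
      exact ⟨fun h => huv (Subtype.ext (Subtype.ext h)), Or.inl le_rfl⟩

/-- If `|H| = 2` and `G/H` has four distinct cyclic subgroups of order 3
generated by `a₁H, a₂H, a₃H, a₄H`, then the subgraph of `Γ_H(G)` induced by
`(⋃ aᵢH) ∪ (⋃ aᵢ²H) ∪ {e}` is isomorphic to `K₁ ∨ 4K₄`. -/
theorem statement_10 {G : Type*} [Group G] [Fintype G] (H : Subgroup G) [H.Normal]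
    (hcard : Nat.card H = 2) (a : Fin 4 → G)
    (hord : ∀ i, orderOf (QuotientGroup.mk (a i) : G ⧸ H) = 3)
    (hdist : ∀ i j, i ≠ j →
      Subgroup.zpowers (QuotientGroup.mk (a i) : G ⧸ H) ≠
        Subgroup.zpowers (QuotientGroup.mk (a j) : G ⧸ H)) :
    Nonempty (((nsbPowerGraph G H).induce
      {v : nsbVertexSet H |
        (∃ i, (QuotientGroup.mk (v : G) : G ⧸ H) = QuotientGroup.mk (a i) ∨
          (QuotientGroup.mk (v : G) : G ⧸ H) = QuotientGroup.mk ((a i) ^ 2)) ∨ (v : G) = 1})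
      ≃g graphJoin (kGraph 1) (unionKGraph 4 4)) := by
  have h := nonempty_iso_induce_nsbPowerGraph_of_orderOf_eq_three a hord hdist
  rw [hcard] at h
  exact h
end

section
/- Let G be a finite group and H a normal subgroup of G with |H| = 2 such that the quotient group G/H is isomorphic to the symmetric group S_3. Then the normal subgroup based power graph Γ_H(G) is isomorphic to the graph K_1 ∨ (K_4 ∪ 3K_2). -/
/-!
Adjacency in `Γ_H(G)` depends only on the cosets of the two vertices, so `Γ_H(G)` is the graph
on `(G \ H) ∪ {e}` in which distinct vertices are adjacent when their images in `G/H ≅ S₃` are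
powers of one another. A graph built in this way from a labelling of its vertices is determined
up to isomorphism by the sizes of the fibres of the labelling; here `e` is the only vertex over
the identity and every other permutation has `|H| = 2` vertices over it. The target graph arises
in the same way: its `K₄` lies over the 3-cycles, which are powers of each other, and its three
copies of `K₂` over the three transpositions, which are related only to themselves and to `1`.
-/

def IsPosPowOf {K : Type*} [Monoid K] (x y : K) : Prop := ∃ m : ℕ, 0 < m ∧ x = y ^ m

def labelGraph {V K : Type*} (r : K → K → Prop) (p : V → K) : SimpleGraph V :=
  SimpleGraph.fromRel fun a b => r (p a) (p b)

theorem nonempty_labelGraph_iso_of_card_fiber_eq {V W K : Type*} [Finite V] [Finite W]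
    (r : K → K → Prop) (p : V → K) (q : W → K)
    (h : ∀ k, Nat.card {v // p v = k} = Nat.card {w // q w = k}) :
    Nonempty (labelGraph r p ≃g labelGraph r q) := by
  have e k : {v // p v = k} ≃ {w // q w = k} := (Finite.card_eq.mp (h k)).some
  refine ⟨⟨Equiv.ofFiberEquiv e, fun {a b} => ?_⟩⟩
  simp only [labelGraph, SimpleGraph.fromRel_adj, (Equiv.ofFiberEquiv e).injective.ne_iff,
    Equiv.ofFiberEquiv_map]

section IsPosPowOf

variable {K L F : Type*} [Monoid K] [Monoid L] [FunLike F K L] [MonoidHomClass F K L]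

theorem isPosPowOf_map_iff {f : F} (hf : Function.Injective f) {x y : K} :
    IsPosPowOf (f x) (f y) ↔ IsPosPowOf x y := by
  simp only [IsPosPowOf, ← map_pow, hf.eq_iff]

theorem labelGraph_isPosPowOf_comp {V : Type*} {f : F} (hf : Function.Injective f) (p : V → K) :
    labelGraph IsPosPowOf (f ∘ p) = labelGraph IsPosPowOf p := by
  ext a b
  simp only [labelGraph, SimpleGraph.fromRel_adj, Function.comp_apply, isPosPowOf_map_iff hf]

theorem isPosPowOf_iff_exists_fin {n : ℕ} (hn0 : 0 < n) (hn : ∀ y : K, y ^ n = 1) {x y : K} :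
    IsPosPowOf x y ↔ ∃ m : Fin n, x = y ^ (m + 1 : ℕ) := by
  constructor
  · rintro ⟨m, hm, rfl⟩
    refine ⟨⟨(m - 1) % n, Nat.mod_lt _ hn0⟩, ?_⟩
    rw [pow_succ, ← pow_eq_pow_mod _ (hn y), ← pow_succ, Nat.sub_add_cancel hm]
  · rintro ⟨m, rfl⟩
    exact ⟨m + 1, m.succ_pos, rfl⟩

end IsPosPowOf

section nsbPowerGraph

variable {G : Type*} [Group G] (H : Subgroup G) [H.Normal]

theorem nsbPowerGraph_eq_labelGraph :
    nsbPowerGraph G H = labelGraph IsPosPowOf fun v : nsbVertexSet H => (v : G ⧸ H) := by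
  ext a b
  simp [nsbPowerGraph, labelGraph, IsPosPowOf, Subtype.ext_iff]

theorem card_fiber_one_nsbVertexSet :
    Nat.card {v : nsbVertexSet H // (v : G ⧸ H) = 1} = 1 := by
  refine Nat.card_eq_one_iff_exists.mpr ⟨⟨⟨1, Or.inr rfl⟩, rfl⟩, fun ⟨⟨g, hg⟩, hg1⟩ => ?_⟩
  have hgH : g ∈ H := (QuotientGroup.eq_one_iff g).mp hg1
  exact Subtype.ext (Subtype.ext (hg.resolve_left (not_not.mpr hgH)))

theorem card_fiber_nsbVertexSet_of_ne_one {c : G ⧸ H} (hc : c ≠ 1) :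
    Nat.card {v : nsbVertexSet H // (v : G ⧸ H) = c} = Nat.card H := by
  have hV {g : G} (hg : (g : G ⧸ H) = c) : g ∈ nsbVertexSet H :=
    Or.inl fun hgH => hc (hg ▸ (QuotientGroup.eq_one_iff g).mpr hgH)
  rw [Nat.card_congr (Equiv.subtypeSubtypeEquivSubtype hV)]
  exact (QuotientGroup.card_preimage_mk H {c}).trans (by simp)

end nsbPowerGraph

theorem perm_fin_three_pow_six (σ : Equiv.Perm (Fin 3)) : σ ^ 6 = 1 := by
  simpa [Fintype.card_perm, Nat.factorial] using pow_card_eq_one (x := σ)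

-- `i / 2 + 1` puts two vertices of `K₄` over each 3-cycle; `swap j (j + 1)` runs through the
-- three transpositions.
def targetLabel : Fin 1 ⊕ (Fin 4 ⊕ Fin 3 × Fin 2) → Equiv.Perm (Fin 3)
  | .inl _ => 1
  | .inr (.inl i) => finRotate 3 ^ (i.val / 2 + 1)
  | .inr (.inr (j, _)) => Equiv.swap j (j + 1)

theorem card_fiber_targetLabel (σ : Equiv.Perm (Fin 3)) :
    Nat.card {t // targetLabel t = σ} = if σ = 1 then 1 else 2 := by
  rw [Nat.card_eq_fintype_card]
  revert σ
  decide

theorem graphJoin_eq_labelGraph_targetLabel :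
    graphJoin (kGraph 1) (SimpleGraph.sum (kGraph 4) (unionKGraph 3 2)) =
      labelGraph IsPosPowOf targetLabel := by
  ext a b
  simp only [labelGraph, SimpleGraph.fromRel_adj,
    isPosPowOf_iff_exists_fin (by norm_num) perm_fin_three_pow_six]
  rcases a with a | a | ⟨j, k⟩ <;> rcases b with b | b | ⟨j', k'⟩ <;>
    simp [graphJoin, kGraph, unionKGraph, SimpleGraph.sum, targetLabel] <;> decide +revert

/-- If `|H| = 2` and `G/H ≅ S₃`, then `Γ_H(G) ≅ K₁ ∨ (K₄ ∪ 3K₂)`. -/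
theorem statement_12 {G : Type*} [Group G] [Fintype G] (H : Subgroup G) [H.Normal]
    (hcard : Nat.card H = 2) (hq : Nonempty (G ⧸ H ≃* Equiv.Perm (Fin 3))) :
    Nonempty (nsbPowerGraph G H ≃g
      graphJoin (kGraph 1) (SimpleGraph.sum (kGraph 4) (unionKGraph 3 2))) := by
  obtain ⟨φ⟩ := hq
  rw [nsbPowerGraph_eq_labelGraph, ← labelGraph_isPosPowOf_comp φ.injective,
    graphJoin_eq_labelGraph_targetLabel]
  refine nonempty_labelGraph_iso_of_card_fiber_eq _ _ _ fun σ => ?_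
  have hfiber : Nat.card {v : nsbVertexSet H // φ (v : G ⧸ H) = σ} =
      Nat.card {v : nsbVertexSet H // (v : G ⧸ H) = φ.symm σ} :=
    Nat.card_congr (Equiv.subtypeEquivRight fun _ => φ.eq_symm_apply.symm)
  rw [Function.comp_def, hfiber, card_fiber_targetLabel]
  by_cases hσ : σ = 1
  · rw [if_pos hσ, hσ, map_one, card_fiber_one_nsbVertexSet]
  · rw [if_neg hσ, card_fiber_nsbVertexSet_of_ne_one H (by simpa using hσ), hcard]
end
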